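/- Let G be a finite simple graph and v ∈ ker(G). Then ker(G) \ {v} is a critical independent set of the graph G − v, and d_c(G − v) = d_c(G) − 1. -/

import Mathlib

open Finset

namespace CritGraph

variable {V : Type*} [Fintype V] [DecidableEq V]

/-- The neighborhood of a set of vertices `X`:
all vertices having at least one neighbor in `X`. -/
def nbhd (G : SimpleGraph V) [DecidableRel G.Adj] (X : Finset V) : Finset V :=
  univ.filter fun v => ∃ x ∈ X, G.Adj v x

/-- The difference `d(X) = |X| - |N(X)|` of a set of vertices `X`. -/
def diff (G : SimpleGraph V) [DecidableRel G.Adj] (X : Finset V) : ℤ :=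
  (X.card : ℤ) - ((nbhd G X).card : ℤ)

/-- A set of vertices is independent if no two of its vertices are adjacent. -/
def IsIndep (G : SimpleGraph V) (S : Finset V) : Prop :=
  ∀ u ∈ S, ∀ v ∈ S, ¬ G.Adj u v

instance (G : SimpleGraph V) [DecidableRel G.Adj] : DecidablePred (IsIndep G) := fun S =>
  inferInstanceAs (Decidable (∀ u ∈ S, ∀ v ∈ S, ¬ G.Adj u v))

/-- The critical difference `d_c(G) = max {d(X) : X ⊆ V}`. -/
def dC (G : SimpleGraph V) [DecidableRel G.Adj] : ℤ :=
  (univ : Finset V).powerset.sup' (Finset.powerset_nonempty _) (diff G)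

/-- The critical independence difference `id_c(G) = max {d(I) : I independent}`. -/
def idC (G : SimpleGraph V) [DecidableRel G.Adj] : ℤ :=
  ((univ : Finset V).powerset.filter (IsIndep G)).sup'
    ⟨∅, by simp [IsIndep]⟩ (diff G)

/-- `A` is a critical independent set: `A` is independent and
`d(A) = max {d(I) : I independent}`. -/
def IsCritIndep (G : SimpleGraph V) [DecidableRel G.Adj] (A : Finset V) : Prop :=
  IsIndep G A ∧ ∀ I : Finset V, IsIndep G I → diff G I ≤ diff G A

instance (G : SimpleGraph V) [DecidableRel G.Adj] : DecidablePred (IsCritIndep G) := fun A =>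
  inferInstanceAs (Decidable (IsIndep G A ∧ ∀ I : Finset V, IsIndep G I → diff G I ≤ diff G A))

/-- `ker(G)`: the intersection of all critical independent sets of `G`. -/
def kerG (G : SimpleGraph V) [DecidableRel G.Adj] : Finset V :=
  univ.filter fun v => ∀ A : Finset V, IsCritIndep G A → v ∈ A

/-- `G - v`: the induced subgraph of `G` on `V \ {v}`. -/
def deleteVert (G : SimpleGraph V) (v : V) : SimpleGraph {u : V // u ≠ v} :=
  G.comap Subtype.val

instance (G : SimpleGraph V) (v : V) [DecidableRel G.Adj] :
    DecidableRel (deleteVert G v).Adj := fun a b =>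
  inferInstanceAs (Decidable (G.Adj a.val b.val))

/-- `S` is an inclusion-minimal independent set with positive difference. -/
def MinPosIndep (G : SimpleGraph V) [DecidableRel G.Adj] (S : Finset V) : Prop :=
  IsIndep G S ∧ 0 < diff G S ∧ ∀ S' ⊂ S, ¬ (IsIndep G S' ∧ 0 < diff G S')

/-- `S` is a maximum independent set. -/
def IsMaxIndep (G : SimpleGraph V) (S : Finset V) : Prop :=
  IsIndep G S ∧ ∀ I : Finset V, IsIndep G I → I.card ≤ S.card

instance (G : SimpleGraph V) [DecidableRel G.Adj] : DecidablePred (IsMaxIndep G) := fun S =>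
  inferInstanceAs (Decidable (IsIndep G S ∧ ∀ I : Finset V, IsIndep G I → I.card ≤ S.card))

/-- `core(G)`: the intersection of all maximum independent sets of `G`. -/
def coreG (G : SimpleGraph V) [DecidableRel G.Adj] : Finset V :=
  univ.filter fun v => ∀ A : Finset V, IsMaxIndep G A → v ∈ A

/-! The difference `d` is supermodular, and passing from `X` to `X \ N(X)` makes `X` independent
without decreasing `d`. Hence the critical independent sets are exactly the independent sets with
`d = d_c(G)`, they are closed under intersection, and `ker(G)` is the smallest of them. If
`v ∈ ker(G)`, then `v ∈ X \ N(X)` for every `X` with `d(X) = d_c(G)`.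

In `G - v` a set `X` has difference `d(X) + [v ∈ N(X)]`. Were this `≥ d_c(G)`, then either `X`
itself or, by supermodularity against `ker(G)`, one of `X ∩ ker(G)`, `X ∪ ker(G)` would attain
`d_c(G)` while violating `v ∈ X \ N(X)`. So `d_c(G - v) ≤ d_c(G) - 1`, and `ker(G) \ {v}`
attains this bound. -/

section Difference

variable {G : SimpleGraph V} [DecidableRel G.Adj]

omit [DecidableEq V] in
@[simp]
lemma mem_nbhd {X : Finset V} {u : V} : u ∈ nbhd G X ↔ ∃ x ∈ X, G.Adj u x := by
  simp [nbhd]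

omit [DecidableEq V] in
lemma nbhd_mono {X Y : Finset V} (h : X ⊆ Y) : nbhd G X ⊆ nbhd G Y := by
  intro u hu
  obtain ⟨x, hx, hux⟩ := mem_nbhd.mp hu
  exact mem_nbhd.mpr ⟨x, h hx, hux⟩

lemma nbhd_union (X Y : Finset V) : nbhd G (X ∪ Y) = nbhd G X ∪ nbhd G Y := by
  ext u
  simp only [mem_nbhd, mem_union, or_and_right, exists_or]

lemma diff_add_diff_le_diff_union_add_diff_inter (X Y : Finset V) :
    diff G X + diff G Y ≤ diff G (X ∪ Y) + diff G (X ∩ Y) := by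
  have hcard := card_union_add_card_inter X Y
  have hnbhd : #(nbhd G (X ∪ Y)) + #(nbhd G (X ∩ Y)) ≤ #(nbhd G X) + #(nbhd G Y) := by
    rw [nbhd_union, ← card_union_add_card_inter (nbhd G X)]
    exact Nat.add_le_add_left (card_le_card <|
      subset_inter (nbhd_mono inter_subset_left) (nbhd_mono inter_subset_right)) _
  unfold diff
  omega

omit [Fintype V] [DecidableEq V] [DecidableRel G.Adj] in
lemma IsIndep.subset {S T : Finset V} (hT : IsIndep G T) (h : S ⊆ T) : IsIndep G S :=
  fun u hu w hw => hT u (h hu) w (h hw)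

lemma isIndep_sdiff_nbhd (X : Finset V) : IsIndep G (X \ nbhd G X) := by
  intro u hu w hw huw
  exact (mem_sdiff.mp hw).2 (mem_nbhd.mpr ⟨u, (mem_sdiff.mp hu).1, huw.symm⟩)

/-- The vertices of `X ∩ N(X)` leave `X` but also leave the neighbourhood, since
`N(X \ N(X))` is disjoint from `X ∩ N(X)`. -/
lemma diff_le_diff_sdiff_nbhd (X : Finset V) : diff G X ≤ diff G (X \ nbhd G X) := by
  have hcard := card_sdiff_add_card_inter X (nbhd G X)
  have hdisj : Disjoint (nbhd G (X \ nbhd G X)) (X ∩ nbhd G X) := by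
    refine disjoint_right.mpr fun z hz hzN => ?_
    obtain ⟨b, hb, hbz⟩ := mem_nbhd.mp hzN
    exact (mem_sdiff.mp hb).2 (mem_nbhd.mpr ⟨z, (mem_inter.mp hz).1, hbz.symm⟩)
  have hnbhd : #(nbhd G (X \ nbhd G X)) + #(X ∩ nbhd G X) ≤ #(nbhd G X) := by
    rw [← card_union_of_disjoint hdisj]
    exact card_le_card (union_subset (nbhd_mono sdiff_subset) inter_subset_right)
  unfold diff
  omega

omit [DecidableEq V] in
lemma diff_le_dC (X : Finset V) : diff G X ≤ dC G :=
  le_sup' _ (mem_powerset.mpr (subset_univ X))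

omit [DecidableEq V] in
lemma exists_diff_eq_dC : ∃ X : Finset V, diff G X = dC G := by
  obtain ⟨X, -, hX⟩ := exists_mem_eq_sup' (powerset_nonempty (univ : Finset V)) (diff G)
  exact ⟨X, hX.symm⟩

end Difference

section Critical

variable {G : SimpleGraph V} [DecidableRel G.Adj]

omit [DecidableEq V] in
lemma isCritIndep_of_dC_le {A : Finset V} (hA : IsIndep G A) (h : dC G ≤ diff G A) :
    IsCritIndep G A :=
  ⟨hA, fun I _ => (diff_le_dC I).trans h⟩

lemma isCritIndep_sdiff_nbhd {X : Finset V} (hX : dC G ≤ diff G X) :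
    IsCritIndep G (X \ nbhd G X) :=
  isCritIndep_of_dC_le (isIndep_sdiff_nbhd X) (hX.trans (diff_le_diff_sdiff_nbhd X))

lemma exists_isCritIndep : ∃ A : Finset V, IsCritIndep G A := by
  obtain ⟨X, hX⟩ := exists_diff_eq_dC (G := G)
  exact ⟨_, isCritIndep_sdiff_nbhd hX.ge⟩

lemma IsCritIndep.diff_eq_dC {A : Finset V} (hA : IsCritIndep G A) : diff G A = dC G := by
  obtain ⟨X, hX⟩ := exists_diff_eq_dC (G := G)
  refine (diff_le_dC A).antisymm ?_
  calc dC G = diff G X := hX.symm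
    _ ≤ diff G (X \ nbhd G X) := diff_le_diff_sdiff_nbhd X
    _ ≤ diff G A := hA.2 _ (isIndep_sdiff_nbhd X)

lemma IsCritIndep.inter {A B : Finset V} (hA : IsCritIndep G A) (hB : IsCritIndep G B) :
    IsCritIndep G (A ∩ B) := by
  have hsuper := diff_add_diff_le_diff_union_add_diff_inter (G := G) A B
  have hunion := diff_le_dC (G := G) (A ∪ B)
  refine isCritIndep_of_dC_le (hA.1.subset inter_subset_left) ?_
  linarith [hA.diff_eq_dC, hB.diff_eq_dC]

lemma mem_kerG {v : V} : v ∈ kerG G ↔ ∀ A : Finset V, IsCritIndep G A → v ∈ A := by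
  simp [kerG]

/-- A critical independent set of least cardinality lies in every critical independent set,
since its intersection with one is again critical. -/
lemma isCritIndep_kerG : IsCritIndep G (kerG G) := by
  obtain ⟨A₀, hA₀⟩ := exists_isCritIndep (G := G)
  obtain ⟨A, hA, hmin⟩ := exists_min_image ((univ : Finset V).powerset.filter (IsCritIndep G))
    card ⟨A₀, mem_filter.mpr ⟨mem_powerset.mpr (subset_univ _), hA₀⟩⟩
  have hAcrit : IsCritIndep G A := (mem_filter.mp hA).2
  have hAsub : ∀ B, IsCritIndep G B → A ⊆ B := fun B hB =>
    have hAB := hAcrit.inter hB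
    (eq_of_subset_of_card_le inter_subset_left
      (hmin _ (mem_filter.mpr ⟨mem_powerset.mpr (subset_univ _), hAB⟩))).symm ▸ inter_subset_right
  have hker : kerG G = A :=
    Subset.antisymm (fun u hu => mem_kerG.mp hu A hAcrit)
      (fun u hu => mem_kerG.mpr fun B hB => hAsub B hB hu)
  exact hker ▸ hAcrit

lemma mem_sdiff_nbhd_of_mem_kerG {v : V} (hv : v ∈ kerG G) {X : Finset V}
    (hX : dC G ≤ diff G X) : v ∈ X \ nbhd G X :=
  mem_kerG.mp hv _ (isCritIndep_sdiff_nbhd hX)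

/-- `#X - #(N(X) \ {v})` is the difference of `X` in `G - v`. -/
lemma card_sub_card_erase_nbhd_le_of_mem_kerG {v : V} (hv : v ∈ kerG G) {X : Finset V}
    (hvX : v ∉ X) : (#X : ℤ) - #((nbhd G X).erase v) ≤ dC G - 1 := by
  have hmem := fun (Y : Finset V) (hY : dC G ≤ diff G Y) =>
    mem_sdiff.mp (mem_sdiff_nbhd_of_mem_kerG hv hY)
  by_contra! hlt
  by_cases hvN : v ∈ nbhd G X
  · have hX : dC G - 1 ≤ diff G X := by
      have := card_erase_add_one hvN
      unfold diff
      omega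
    have hsuper := diff_add_diff_le_diff_union_add_diff_inter (G := G) X (kerG G)
    have hK := (isCritIndep_kerG (G := G)).diff_eq_dC
    by_cases hinter : dC G ≤ diff G (X ∩ kerG G)
    · exact hvX (mem_inter.mp (hmem _ hinter).1).1
    · exact (hmem (X ∪ kerG G) (by omega)).2 (nbhd_mono subset_union_left hvN)
  · rw [erase_eq_of_notMem hvN] at hlt
    exact hvX (hmem X (by unfold diff; omega)).1

end Critical

section DeleteVertex

variable {G : SimpleGraph V} [DecidableRel G.Adj] {v : V}

lemma nbhd_deleteVert_map (S : Finset {u : V // u ≠ v}) :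
    (nbhd (deleteVert G v) S).map (Function.Embedding.subtype _) =
      (nbhd G (S.map (Function.Embedding.subtype _))).erase v := by
  ext u
  simp only [mem_map, mem_nbhd, mem_erase, Function.Embedding.subtype_apply]
  constructor
  · rintro ⟨u', ⟨x, hx, hux⟩, rfl⟩
    exact ⟨u'.2, x, ⟨x, hx, rfl⟩, hux⟩
  · rintro ⟨huv, _, ⟨x, hx, rfl⟩, hux⟩
    exact ⟨⟨u, huv⟩, ⟨x, hx, hux⟩, rfl⟩

lemma diff_deleteVert (S : Finset {u : V // u ≠ v}) :
    diff (deleteVert G v) S =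
      (#(S.map (Function.Embedding.subtype _)) : ℤ) -
        #((nbhd G (S.map (Function.Embedding.subtype _))).erase v) := by
  rw [diff, ← nbhd_deleteVert_map, card_map, card_map]

lemma diff_sub_one_le_diff_deleteVert (A : Finset V) :
    diff G A - 1 ≤ diff (deleteVert G v) (A.subtype (· ≠ v)) := by
  rw [diff_deleteVert, subtype_map, filter_ne']
  have hA := pred_card_le_card_erase (s := A) (a := v)
  have hN := card_le_card ((erase_subset v _).trans (nbhd_mono (erase_subset v A)) :
    (nbhd G (A.erase v)).erase v ⊆ nbhd G A)
  unfold diff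
  omega

omit [Fintype V] [DecidableRel G.Adj] in
lemma IsIndep.subtype_deleteVert {A : Finset V} (hA : IsIndep G A) :
    IsIndep (deleteVert G v) (A.subtype (· ≠ v)) :=
  fun a ha b hb => hA a (mem_subtype.mp ha) b (mem_subtype.mp hb)

lemma dC_deleteVert_le_of_mem_kerG (hv : v ∈ kerG G) : dC (deleteVert G v) ≤ dC G - 1 := by
  obtain ⟨X, hX⟩ := exists_diff_eq_dC (G := deleteVert G v)
  rw [← hX, diff_deleteVert]
  exact card_sub_card_erase_nbhd_le_of_mem_kerG hv (by simp)

end DeleteVertex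

/-- If `v ∈ ker(G)`, then `ker(G) \ {v}` is a critical independent set of `G - v`,
and `d_c(G - v) = d_c(G) - 1`. -/
theorem kerG_erase_critIndep_of_deleteVert (G : SimpleGraph V) [DecidableRel G.Adj]
    (v : V) (hv : v ∈ kerG G) :
    IsCritIndep (deleteVert G v) ((kerG G).subtype fun u => u ≠ v) ∧
      dC (deleteVert G v) = dC G - 1 := by
  have hK := isCritIndep_kerG (G := G)
  have hlow : dC G - 1 ≤ diff (deleteVert G v) ((kerG G).subtype fun u => u ≠ v) :=
    hK.diff_eq_dC ▸ diff_sub_one_le_diff_deleteVert (kerG G)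
  have hdC : dC (deleteVert G v) = dC G - 1 :=
    (dC_deleteVert_le_of_mem_kerG hv).antisymm (hlow.trans (diff_le_dC _))
  exact ⟨isCritIndep_of_dC_le hK.1.subtype_deleteVert (hdC ▸ hlow), hdC⟩

end CritGraph
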